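/- Let (K, r_n) be a pre-extender on an n-maniplex K and let U(K, r_n) be its universal Cayley extension. For all flags Φ, Ψ of K and all γ, δ ∈ G(K, r_n), the flags (Φ, γ) and (Ψ, δ) of U(K, r_n) lie in the same orbit of Aut(U(K, r_n)) if and only if there exists σ ∈ ♥(K, r_n) with Φσ = Ψ. (Equivalently, the symmetry type graph of U(K, r_n) is the quotient of K_{r_n} by ♥(K, r_n).) -/

import Mathlib

/-! ## Basic notions: maniplexes, premaniplexes, orbits, automorphisms -/

/-- One monodromy step using an index satisfying `P`. -/
def StepOn {K : Type*} {n : ℕ} (r : Fin n → K → K) (P : Fin n → Prop) (x y : K) : Prop :=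
  ∃ i, P i ∧ r i x = y

/-- `y` is reachable from `x` by monodromies whose index satisfies `P`;
this is the orbit relation of the subgroup generated by those monodromies. -/
def ReachOn {K : Type*} {n : ℕ} (r : Fin n → K → K) (P : Fin n → Prop) : K → K → Prop :=
  Relation.ReflTransGen (StepOn r P)

/-- Orbit relation of the full monodromy group. -/
def ConnRel {K : Type*} {n : ℕ} (r : Fin n → K → K) : K → K → Prop :=
  ReachOn r fun _ => True

/-- Same facet: orbit relation of `r_0, …, r_{n-2}`. -/
def FacetRel {K : Type*} {n : ℕ} (r : Fin n → K → K) : K → K → Prop :=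
  ReachOn r fun i => (i : ℕ) + 1 < n

/-- Same vertex: orbit relation of `r_1, …, r_{n-1}`. -/
def VertexRel {K : Type*} {n : ℕ} (r : Fin n → K → K) : K → K → Prop :=
  ReachOn r fun i => 1 ≤ (i : ℕ)

/-- An `n`-maniplex on the flag set `K`, given by its monodromies `r_0, …, r_{n-1}`. -/
structure IsManiplex {K : Type*} (n : ℕ) (r : Fin n → K → K) : Prop where
  nonempty : Nonempty K
  invol : ∀ i, Function.Involutive (r i)
  fixfree : ∀ (i : Fin n) (x : K), r i x ≠ x
  fixfree₂ : ∀ (i j : Fin n), i ≠ j → ∀ x : K, r i (r j x) ≠ x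
  sq : ∀ (i j : Fin n), 2 ≤ |(i : ℤ) - (j : ℤ)| → ∀ x : K, r i (r j (r i (r j x))) = x
  conn : ∀ x y : K, ConnRel r x y

/-- A premaniplex of rank `n` (fixed points allowed, connectivity not required). -/
structure IsPremaniplex {K : Type*} (n : ℕ) (r : Fin n → K → K) : Prop where
  invol : ∀ i, Function.Involutive (r i)
  sq : ∀ (i j : Fin n), 2 ≤ |(i : ℤ) - (j : ℤ)| → ∀ x : K, r i (r j (r i (r j x))) = x

/-- The automorphism group: permutations of the flags commuting with every monodromy. -/
def autGroup {K : Type*} {n : ℕ} (r : Fin n → K → K) : Subgroup (Equiv.Perm K) where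
  carrier := {τ : Equiv.Perm K | ∀ (i : Fin n) (x : K), τ (r i x) = r i (τ x)}
  one_mem' := by intro i x; rfl
  mul_mem' := by
    intro a b ha hb i x
    simp only [Set.mem_setOf_eq] at ha hb ⊢
    simp only [Equiv.Perm.mul_apply]
    rw [hb i x, ha i (b x)]
  inv_mem' := by
    intro a ha i x
    simp only [Set.mem_setOf_eq] at ha ⊢
    have h := ha i (a⁻¹ x)
    have e1 : a (a⁻¹ x) = x := by simp
    rw [e1] at h
    rw [← h]
    simp

/-- A pre-extender: an involutory permutation `rn` of the flags of the `n`-maniplex `(K, r)`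
commuting with `r_0, …, r_{n-2}`. -/
structure IsPreExtender {K : Type*} {n : ℕ} (r : Fin n → K → K) (rn : K → K) : Prop where
  maniplex : IsManiplex n r
  rn_invol : Function.Involutive rn
  rn_comm : ∀ i : Fin n, (i : ℕ) + 1 < n → ∀ x : K, rn (r i x) = r i (rn x)

/-- A Cayley extender `(K, rn, ξ)` with voltage group `G`; the voltage is encoded as a
function on flags which is constant on facets. -/
structure IsCayleyExtender {K : Type*} {G : Type*} [Group G] {n : ℕ}
    (r : Fin n → K → K) (rn : K → K) (ξ : K → G) : Prop where
  maniplex : IsManiplex n r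
  rn_invol : Function.Involutive rn
  rn_comm : ∀ i : Fin n, (i : ℕ) + 1 < n → ∀ x : K, rn (r i x) = r i (rn x)
  const : ∀ Φ Ψ : K, FacetRel r Φ Ψ → ξ Φ = ξ Ψ
  voltage_inv : ∀ Φ : K, ξ (rn Φ) = (ξ Φ)⁻¹

/-- A Cayley coextender `(K, r_{-1}, ξ')` with voltage group `G'`; the voltage is encoded as
a function on flags which is constant on vertices. -/
structure IsCayleyCoextender {K : Type*} {G' : Type*} [Group G'] {n : ℕ}
    (r : Fin n → K → K) (rm : K → K) (ξ' : K → G') : Prop where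
  maniplex : IsManiplex n r
  rm_invol : Function.Involutive rm
  rm_comm : ∀ i : Fin n, 1 ≤ (i : ℕ) → ∀ x : K, rm (r i x) = r i (rm x)
  const : ∀ Φ Ψ : K, VertexRel r Φ Ψ → ξ' Φ = ξ' Ψ
  voltage_inv : ∀ Φ : K, ξ' (rm Φ) = (ξ' Φ)⁻¹

/-- Monodromies of the derived graph `K_{rn}^ξ` on flag set `K × G`. -/
def derivedMono {K : Type*} {G : Type*} [Group G] {n : ℕ}
    (r : Fin n → K → K) (rn : K → K) (ξ : K → G) : Fin (n + 1) → K × G → K × G :=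
  fun i p =>
    if h : (i : ℕ) < n then (r ⟨(i : ℕ), h⟩ p.1, p.2) else (rn p.1, ξ p.1 * p.2)

/-- Monodromies of the derived graph `K_{r_{-1}}^{ξ'}` of a coextender, on flag set `K × G'`. -/
def coderivedMono {K : Type*} {G' : Type*} [Group G'] {n : ℕ}
    (r : Fin n → K → K) (rm : K → K) (ξ' : K → G') : Fin (n + 1) → K × G' → K × G' :=
  fun i p =>
    if _h : (i : ℕ) = 0 then (rm p.1, ξ' p.1 * p.2)
    else (r ⟨(i : ℕ) - 1, by have := i.isLt; omega⟩ p.1, p.2)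

/-- Monodromies of the flat amalgamation, on flag set `K × G' × G`. -/
def amalgMono {K : Type*} {G' : Type*} {G : Type*} [Group G'] [Group G] {n : ℕ}
    (r : Fin n → K → K) (rm : K → K) (rn : K → K) (ξ' : K → G') (ξ : K → G) :
    Fin (n + 2) → K × G' × G → K × G' × G :=
  fun i p =>
    if _h0 : (i : ℕ) = 0 then (rm p.1, ξ' p.1 * p.2.1, p.2.2)
    else if _hn : (i : ℕ) = n + 1 then (rn p.1, p.2.1, ξ p.1 * p.2.2)
    else (r ⟨(i : ℕ) - 1, by have := i.isLt; omega⟩ p.1, p.2.1, p.2.2)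

/-- The path intersection property characterizing flag graphs of polytopes. -/
def IsPolytopal {K : Type*} {m : ℕ} (t : Fin m → K → K) : Prop :=
  ∀ (x y : K) (k l : ℕ), k ≤ l → l < m →
    ReachOn t (fun i => k ≤ (i : ℕ)) x y →
    ReachOn t (fun i => (i : ℕ) ≤ l) x y →
    ReachOn t (fun i => k ≤ (i : ℕ) ∧ (i : ℕ) ≤ l) x y

/-- `S` is an `(rn, rn')`-friendly set: for every flag `Φ` and `τ ∈ S` there is `σ ∈ S`
with `rn'(Φτ) = (rn Φ)σ` (automorphisms act on the right, i.e. by function application). -/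
def FriendlySet {K : Type*} (rn rn' : K → K) (S : Set (Equiv.Perm K)) : Prop :=
  ∀ Φ : K, ∀ τ ∈ S, ∃ σ ∈ S, rn' (τ Φ) = σ (rn Φ)

/-- `♥(K, rn)`: the union of all `rn`-friendly subsets of `Aut(K)`. -/
def heartSet {K : Type*} {n : ℕ} (r : Fin n → K → K) (rn : K → K) : Set (Equiv.Perm K) :=
  ⋃₀ {S : Set (Equiv.Perm K) | S ⊆ ↑(autGroup r) ∧ FriendlySet rn rn S}

/-- Relations of the universal voltage group `G(K, rn)`: one generator per flag, generators of
flags in the same facet are identified, and `α_F · α_{rn F} = 1`. -/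
def UnivRels {K : Type*} {n : ℕ} (r : Fin n → K → K) (rn : K → K) : Set (FreeGroup K) :=
  {w | ∃ Φ Ψ : K, FacetRel r Φ Ψ ∧ w = FreeGroup.of Φ * (FreeGroup.of Ψ)⁻¹} ∪
    {w | ∃ Φ : K, w = FreeGroup.of Φ * FreeGroup.of (rn Φ)}

/-- The universal voltage assignment `Φ ↦ α_{F_Φ}` into `G(K, rn)`. -/
def univVoltage {K : Type*} {n : ℕ} (r : Fin n → K → K) (rn : K → K) :
    K → PresentedGroup (UnivRels r rn) :=
  fun Φ => PresentedGroup.of Φ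


namespace Statement17Aux

open Relation

variable {K : Type*} {n : ℕ}

/-! ### Basic automorphism lemmas -/

theorem aut_apply {r : Fin n → K → K} {π : Equiv.Perm K} (hπ : π ∈ autGroup r)
    (i : Fin n) (x : K) : π (r i x) = r i (π x) := hπ i x

theorem aut_unique {r : Fin n → K → K} (hconn : ∀ x y : K, ConnRel r x y)
    {π π' : Equiv.Perm K} (hπ : π ∈ autGroup r) (hπ' : π' ∈ autGroup r)
    {Λ : K} (h : π Λ = π' Λ) : π = π' := by
  ext x
  have hc : Relation.ReflTransGen (StepOn r fun _ => True) Λ x := hconn Λ x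
  induction hc with
  | refl => exact h
  | tail _ hstep ih =>
    obtain ⟨i, -, rfl⟩ := hstep
    rw [hπ i, hπ' i, ih]

theorem aut_facetRel {r : Fin n → K → K} {π : Equiv.Perm K} (hπ : π ∈ autGroup r)
    {Λ Λ' : K} (h : FacetRel r Λ Λ') : FacetRel r (π Λ) (π Λ') := by
  have h' : Relation.ReflTransGen (StepOn r fun i => (i : ℕ) + 1 < n) Λ Λ' := h
  clear h
  induction h' with
  | refl => exact Relation.ReflTransGen.refl
  | tail _ hstep ih =>
    obtain ⟨i, hi, rfl⟩ := hstep
    exact Relation.ReflTransGen.tail ih ⟨i, hi, (hπ i _).symm⟩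

/-! ### Heart set lemmas -/

theorem heart_subset_aut (r : Fin n → K → K) (rn : K → K) :
    heartSet r rn ⊆ ↑(autGroup r) := by
  rintro π ⟨S, ⟨hS, -⟩, hπ⟩
  exact hS hπ

theorem heart_friendly (r : Fin n → K → K) (rn : K → K) :
    FriendlySet rn rn (heartSet r rn) := by
  rintro Φ τ ⟨S, ⟨hS, hF⟩, hτ⟩
  obtain ⟨σ, hσ, he⟩ := hF Φ τ hτ
  exact ⟨σ, ⟨S, ⟨hS, hF⟩, hσ⟩, he⟩

theorem heart_inv {r : Fin n → K → K} {rn : K → K} {σ : Equiv.Perm K}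
    (h : σ ∈ heartSet r rn) : σ⁻¹ ∈ heartSet r rn := by
  obtain ⟨S, ⟨hS, hF⟩, hσ⟩ := h
  refine ⟨Inv.inv '' S, ⟨?_, ?_⟩, ⟨σ, hσ, rfl⟩⟩
  · rintro π ⟨π', hπ', rfl⟩
    exact (autGroup r).inv_mem (hS hπ')
  · rintro Φ τ ⟨π, hπ, rfl⟩
    obtain ⟨ρ, hρ, he⟩ := hF (π⁻¹ Φ) π hπ
    refine ⟨ρ⁻¹, ⟨ρ, hρ, rfl⟩, ?_⟩
    rw [show ∀ y, π (π⁻¹ y) = y from fun y => Equiv.Perm.eq_inv_iff_eq.mp rfl] at he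
    rw [he]
    exact (Equiv.Perm.inv_eq_iff_eq.mpr rfl).symm

end Statement17Aux

namespace Statement17Aux

variable {K : Type*} {n : ℕ}

/-! ### Universal voltage group lemmas -/

theorem vv_mul_rn (r : Fin n → K → K) (rn : K → K) (Φ : K) :
    univVoltage r rn Φ * univVoltage r rn (rn Φ) = 1 := by
  have hmem : (FreeGroup.of Φ * FreeGroup.of (rn Φ)) ∈
      Subgroup.normalClosure (UnivRels r rn) :=
    Subgroup.subset_normalClosure (Or.inr ⟨Φ, rfl⟩)
  have h1 : PresentedGroup.mk (UnivRels r rn) (FreeGroup.of Φ * FreeGroup.of (rn Φ)) = 1 :=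
    (QuotientGroup.eq_one_iff _).2 hmem
  rw [map_mul] at h1
  exact h1

theorem rn_mul_vv {rn : K → K} (r : Fin n → K → K) (hrn : Function.Involutive rn) (Φ : K) :
    univVoltage r rn (rn Φ) * univVoltage r rn Φ = 1 := by
  have := vv_mul_rn r rn (rn Φ)
  rwa [hrn Φ] at this

theorem vv_inv {rn : K → K} (r : Fin n → K → K) (hrn : Function.Involutive rn) (Φ : K) :
    (univVoltage r rn Φ)⁻¹ = univVoltage r rn (rn Φ) :=
  (eq_inv_of_mul_eq_one_left (rn_mul_vv r hrn Φ)).symm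

theorem vv_facet (r : Fin n → K → K) (rn : K → K) {Φ Ψ : K} (h : FacetRel r Φ Ψ) :
    univVoltage r rn Φ = univVoltage r rn Ψ := by
  have hmem : (FreeGroup.of Φ * (FreeGroup.of Ψ)⁻¹) ∈
      Subgroup.normalClosure (UnivRels r rn) :=
    Subgroup.subset_normalClosure (Or.inl ⟨Φ, Ψ, h, rfl⟩)
  have h1 : PresentedGroup.mk (UnivRels r rn) (FreeGroup.of Φ * (FreeGroup.of Ψ)⁻¹) = 1 :=
    (QuotientGroup.eq_one_iff _).2 hmem
  rw [map_mul, map_inv] at h1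
  exact eq_of_mul_inv_eq_one h1

/-! ### Derived monodromies -/

theorem dm_lt {G : Type*} [Group G] (r : Fin n → K → K) (rn : K → K) (ξ : K → G)
    {i : Fin (n + 1)} (h : (i : ℕ) < n) (p : K × G) :
    derivedMono r rn ξ i p = (r ⟨(i : ℕ), h⟩ p.1, p.2) := dif_pos h

theorem dm_ge {G : Type*} [Group G] (r : Fin n → K → K) (rn : K → K) (ξ : K → G)
    {i : Fin (n + 1)} (h : ¬ (i : ℕ) < n) (p : K × G) :
    derivedMono r rn ξ i p = (rn p.1, ξ p.1 * p.2) := dif_neg h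

theorem dm_castSucc {G : Type*} [Group G] (r : Fin n → K → K) (rn : K → K) (ξ : K → G)
    (i : Fin n) (p : K × G) :
    derivedMono r rn ξ i.castSucc p = (r i p.1, p.2) := by
  have h : ((i.castSucc : Fin (n + 1)) : ℕ) < n := by simp
  rw [dm_lt r rn ξ h]
  have he : (⟨((i.castSucc : Fin (n + 1)) : ℕ), h⟩ : Fin n) = i := Fin.ext (by simp)
  rw [he]

theorem dm_last {G : Type*} [Group G] (r : Fin n → K → K) (rn : K → K) (ξ : K → G)
    (p : K × G) :
    derivedMono r rn ξ (Fin.last n) p = (rn p.1, ξ p.1 * p.2) := by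
  apply dm_ge
  simp

/-! ### Words acting on the derived graph -/

/-- Action of a word of monodromy indices on flags of the derived graph. -/
def listAct {G : Type*} [Group G] (r : Fin n → K → K) (rn : K → K) (ξ : K → G)
    (w : List (Fin (n + 1))) (p : K × G) : K × G :=
  w.foldr (derivedMono r rn ξ) p

/-- Action of a word on the base, with `s_n` acting as `rn`. -/
def actK (r : Fin n → K → K) (rn : K → K) : List (Fin (n + 1)) → K → K
  | [], Λ => Λ
  | i :: w, Λ =>
      if h : (i : ℕ) < n then r ⟨(i : ℕ), h⟩ (actK r rn w Λ) else rn (actK r rn w Λ)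

/-- Accumulated voltage of a word. -/
def volt {G : Type*} [Group G] (r : Fin n → K → K) (rn : K → K) (ξ : K → G) :
    List (Fin (n + 1)) → K → G
  | [], _ => 1
  | i :: w, Λ =>
      if (i : ℕ) < n then volt r rn ξ w Λ else ξ (actK r rn w Λ) * volt r rn ξ w Λ

theorem listAct_nil {G : Type*} [Group G] (r : Fin n → K → K) (rn : K → K) (ξ : K → G)
    (p : K × G) : listAct r rn ξ [] p = p := rfl

theorem listAct_cons {G : Type*} [Group G] (r : Fin n → K → K) (rn : K → K) (ξ : K → G)
    (i : Fin (n + 1)) (w : List (Fin (n + 1))) (p : K × G) :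
    listAct r rn ξ (i :: w) p = derivedMono r rn ξ i (listAct r rn ξ w p) := rfl

theorem listAct_append {G : Type*} [Group G] (r : Fin n → K → K) (rn : K → K) (ξ : K → G)
    (a b : List (Fin (n + 1))) (p : K × G) :
    listAct r rn ξ (a ++ b) p = listAct r rn ξ a (listAct r rn ξ b p) :=
  List.foldr_append ..

theorem listAct_eq (r : Fin n → K → K) (rn : K → K) (w : List (Fin (n + 1)))
    (Λ : K) (g : PresentedGroup (UnivRels r rn)) :
    listAct r rn (univVoltage r rn) w (Λ, g) =
      (actK r rn w Λ, volt r rn (univVoltage r rn) w Λ * g) := by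
  induction w with
  | nil => simp [listAct_nil, actK, volt]
  | cons i w ih =>
    rw [listAct_cons, ih]
    by_cases h : (i : ℕ) < n
    · rw [dm_lt r rn _ h]
      simp [actK, volt, h]
    · rw [dm_ge r rn _ h]
      simp [actK, volt, h, mul_assoc]

end Statement17Aux

namespace Statement17Aux

variable {K : Type*} {n : ℕ}

/-! ### The action of the universal group on heart × group -/

theorem step_exists (r : Fin n → K → K) (rn : K → K)
    {π : Equiv.Perm K} (hπ : π ∈ heartSet r rn) (Λ : K) :
    ∃ π', π' ∈ heartSet r rn ∧ π' (rn Λ) = rn (π Λ) := by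
  obtain ⟨σ, hσ, he⟩ := heart_friendly r rn Λ π hπ
  exact ⟨σ, hσ, he.symm⟩

/-- Carrier for the auxiliary action: heart elements paired with group elements. -/
def HeartX (r : Fin n → K → K) (rn : K → K) : Type _ :=
  {π : Equiv.Perm K // π ∈ heartSet r rn} × PresentedGroup (UnivRels r rn)

/-- The unique continuation of a heart automorphism across `rn` at the facet of `Λ`. -/
noncomputable def stepPerm (r : Fin n → K → K) (rn : K → K) (Λ : K)
    (π : {π : Equiv.Perm K // π ∈ heartSet r rn}) :
    {π : Equiv.Perm K // π ∈ heartSet r rn} :=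
  ⟨(step_exists r rn π.2 Λ).choose, (step_exists r rn π.2 Λ).choose_spec.1⟩

theorem stepPerm_spec (r : Fin n → K → K) (rn : K → K) (Λ : K)
    (π : {π : Equiv.Perm K // π ∈ heartSet r rn}) :
    (stepPerm r rn Λ π).1 (rn Λ) = rn (π.1 Λ) :=
  (step_exists r rn π.2 Λ).choose_spec.2

/-- The generator `α_Λ` acting on `HeartX`. -/
noncomputable def stepX (r : Fin n → K → K) (rn : K → K) (Λ : K)
    (p : HeartX r rn) : HeartX r rn :=
  (stepPerm r rn Λ p.1, univVoltage r rn (p.1.1 Λ) * p.2)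

theorem stepX_stepX {r : Fin n → K → K} {rn : K → K} (hpre : IsPreExtender r rn)
    (Λ : K) (p : HeartX r rn) : stepX r rn (rn Λ) (stepX r rn Λ p) = p := by
  obtain ⟨π, h⟩ := p
  unfold stepX
  refine Prod.ext ?_ ?_
  · apply Subtype.ext
    refine aut_unique hpre.maniplex.conn
      (heart_subset_aut r rn (stepPerm r rn (rn Λ) (stepPerm r rn Λ π)).2)
      (heart_subset_aut r rn π.2) (Λ := Λ) ?_
    have h1 := stepPerm_spec r rn (rn Λ) (stepPerm r rn Λ π)
    rw [hpre.rn_invol Λ] at h1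
    rw [h1, stepPerm_spec r rn Λ π, hpre.rn_invol]
  · show univVoltage r rn ((stepPerm r rn Λ π).1 (rn Λ)) * (univVoltage r rn (π.1 Λ) * h) = h
    rw [stepPerm_spec r rn Λ π, ← mul_assoc, rn_mul_vv r hpre.rn_invol, one_mul]

/-- The generator `α_Λ` as a permutation of `HeartX`. -/
noncomputable def stepE {r : Fin n → K → K} {rn : K → K} (hpre : IsPreExtender r rn)
    (Λ : K) : Equiv.Perm (HeartX r rn) where
  toFun := stepX r rn Λ
  invFun := stepX r rn (rn Λ)
  left_inv p := stepX_stepX hpre Λ p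
  right_inv p := by
    have h := stepX_stepX hpre (rn Λ) p
    rwa [hpre.rn_invol Λ] at h

theorem stepE_facet {r : Fin n → K → K} {rn : K → K} (hpre : IsPreExtender r rn)
    {Φ Ψ : K} (h : FacetRel r Φ Ψ) : stepE hpre Φ = stepE hpre Ψ := by
  apply Equiv.ext
  rintro ⟨π, g⟩
  show stepX r rn Φ (π, g) = stepX r rn Ψ (π, g)
  unfold stepX
  refine Prod.ext ?_ ?_
  · apply Subtype.ext
    refine aut_unique hpre.maniplex.conn
      (heart_subset_aut r rn (stepPerm r rn Φ π).2)
      (heart_subset_aut r rn (stepPerm r rn Ψ π).2) (Λ := rn Ψ) ?_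
    rw [stepPerm_spec r rn Ψ π]
    -- transport the defining property along the facet relation
    have key : ∀ Ψ' : K, FacetRel r Φ Ψ' → (stepPerm r rn Φ π).1 (rn Ψ') = rn (π.1 Ψ') := by
      intro Ψ' hΨ'
      have h' : Relation.ReflTransGen (StepOn r fun i => (i : ℕ) + 1 < n) Φ Ψ' := hΨ'
      clear hΨ'
      induction h' with
      | refl => exact stepPerm_spec r rn Φ π
      | tail _ hstep ih =>
        obtain ⟨i, hi, rfl⟩ := hstep
        rw [hpre.rn_comm i hi,
          aut_apply (heart_subset_aut r rn (stepPerm r rn Φ π).2) i, ih,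
          aut_apply (heart_subset_aut r rn π.2) i, hpre.rn_comm i hi]
    exact key Ψ h
  · show univVoltage r rn (π.1 Φ) * g = univVoltage r rn (π.1 Ψ) * g
    rw [vv_facet r rn (aut_facetRel (heart_subset_aut r rn π.2) h)]

theorem relations_hold {r : Fin n → K → K} {rn : K → K} (hpre : IsPreExtender r rn) :
    ∀ w ∈ UnivRels r rn, FreeGroup.lift (fun Λ => stepE hpre Λ) w = 1 := by
  rintro w (⟨Φ, Ψ, hF, rfl⟩ | ⟨Φ, rfl⟩)
  · rw [map_mul, map_inv, FreeGroup.lift_apply_of, FreeGroup.lift_apply_of, stepE_facet hpre hF,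
      mul_inv_cancel]
  · rw [map_mul, FreeGroup.lift_apply_of, FreeGroup.lift_apply_of]
    apply Equiv.ext
    intro p
    show stepX r rn Φ (stepX r rn (rn Φ) p) = p
    have h := stepX_stepX hpre (rn Φ) p
    rwa [hpre.rn_invol Φ] at h

/-- The homomorphism from the universal group to permutations of `HeartX`. -/
noncomputable def theta {r : Fin n → K → K} {rn : K → K} (hpre : IsPreExtender r rn) :
    PresentedGroup (UnivRels r rn) →* Equiv.Perm (HeartX r rn) :=
  PresentedGroup.toGroup (relations_hold hpre)

theorem theta_of {r : Fin n → K → K} {rn : K → K} (hpre : IsPreExtender r rn) (Φ : K) :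
    theta hpre (univVoltage r rn Φ) = stepE hpre Φ :=
  PresentedGroup.toGroup.of (relations_hold hpre)

end Statement17Aux

namespace Statement17Aux

variable {K : Type*} {n : ℕ}

theorem loop {r : Fin n → K → K} {rn : K → K} (hpre : IsPreExtender r rn)
    (w : List (Fin (n + 1))) (π : {π : Equiv.Perm K // π ∈ heartSet r rn})
    (g : PresentedGroup (UnivRels r rn)) (Λ : K) :
    (theta hpre (volt r rn (univVoltage r rn) w Λ) (π, g)).2 =
        volt r rn (univVoltage r rn) w (π.1 Λ) * g ∧
      ((theta hpre (volt r rn (univVoltage r rn) w Λ) (π, g)).1).1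
          (actK r rn w Λ) = actK r rn w (π.1 Λ) := by
  induction w with
  | nil =>
    simp only [volt, map_one, Equiv.Perm.coe_one, id_eq, actK]
    exact ⟨(one_mul g).symm, rfl⟩
  | cons i w ih =>
    by_cases h : (i : ℕ) < n
    · simp only [volt, actK, if_pos h, dif_pos h]
      refine ⟨ih.1, ?_⟩
      rw [aut_apply (heart_subset_aut r rn
        ((theta hpre (volt r rn (univVoltage r rn) w Λ) (π, g)).1).2) ⟨(i : ℕ), h⟩, ih.2]
    · simp only [volt, actK, if_neg h, dif_neg h]
      rw [map_mul]; erw [Equiv.Perm.mul_apply]; rw [theta_of]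
      set q := theta hpre (volt r rn (univVoltage r rn) w Λ) (π, g) with hq
      have e1 : (stepE hpre (actK r rn w Λ)) q =
          (stepPerm r rn (actK r rn w Λ) q.1,
            univVoltage r rn (q.1.1 (actK r rn w Λ)) * q.2) := rfl
      rw [e1]
      constructor
      · show univVoltage r rn (q.1.1 (actK r rn w Λ)) * q.2 = _
        rw [ih.2, ih.1, ← mul_assoc]
      · show (stepPerm r rn (actK r rn w Λ) q.1).1 (rn (actK r rn w Λ)) = _
        rw [stepPerm_spec, ih.2]

theorem main_transfer {r : Fin n → K → K} {rn : K → K} (hpre : IsPreExtender r rn)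
    {σ : Equiv.Perm K} (hσ : σ ∈ heartSet r rn) {Φ : K} (w : List (Fin (n + 1)))
    (h1 : actK r rn w Φ = Φ) (h2 : volt r rn (univVoltage r rn) w Φ = 1) :
    actK r rn w (σ Φ) = σ Φ ∧ volt r rn (univVoltage r rn) w (σ Φ) = 1 := by
  have hl := loop hpre w ⟨σ, hσ⟩ 1 Φ
  rw [h2, map_one] at hl
  simp only [Equiv.Perm.coe_one, id_eq] at hl
  obtain ⟨ha, hb⟩ := hl
  rw [h1] at hb
  refine ⟨hb.symm, ?_⟩
  have := ha.symm
  rwa [mul_one] at this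

end Statement17Aux

namespace Statement17Aux

variable {K : Type*} {n : ℕ}

/-! ### Connectivity of the derived graph -/

theorem dm_invol {r : Fin n → K → K} {rn : K → K} (hpre : IsPreExtender r rn)
    (i : Fin (n + 1)) (p : K × PresentedGroup (UnivRels r rn)) :
    derivedMono r rn (univVoltage r rn) i (derivedMono r rn (univVoltage r rn) i p) = p := by
  by_cases h : (i : ℕ) < n
  · rw [dm_lt r rn _ h, dm_lt r rn _ h]
    simp [hpre.maniplex.invol ⟨(i : ℕ), h⟩ p.1]
  · rw [dm_ge r rn _ h, dm_ge r rn _ h]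
    simp only
    rw [hpre.rn_invol p.1, ← mul_assoc, rn_mul_vv r hpre.rn_invol, one_mul]

theorem listAct_reverse {r : Fin n → K → K} {rn : K → K} (hpre : IsPreExtender r rn)
    (w : List (Fin (n + 1))) (p : K × PresentedGroup (UnivRels r rn)) :
    listAct r rn (univVoltage r rn) w.reverse (listAct r rn (univVoltage r rn) w p) = p := by
  induction w generalizing p with
  | nil => rfl
  | cons i w ih =>
    rw [listAct_cons, List.reverse_cons, listAct_append]
    have h1 : listAct r rn (univVoltage r rn) [i]
        (derivedMono r rn (univVoltage r rn) i (listAct r rn (univVoltage r rn) w p)) =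
        listAct r rn (univVoltage r rn) w p := dm_invol hpre i _
    rw [h1, ih]

theorem listAct_reverse' {r : Fin n → K → K} {rn : K → K} (hpre : IsPreExtender r rn)
    (w : List (Fin (n + 1))) (p : K × PresentedGroup (UnivRels r rn)) :
    listAct r rn (univVoltage r rn) w (listAct r rn (univVoltage r rn) w.reverse p) = p := by
  have h := listAct_reverse hpre w.reverse p
  rwa [List.reverse_reverse] at h

theorem reach_base {r : Fin n → K → K} {rn : K → K} (hpre : IsPreExtender r rn)
    {Λ Λ' : K} (h : ConnRel r Λ Λ') (g : PresentedGroup (UnivRels r rn)) :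
    ∃ w, listAct r rn (univVoltage r rn) w (Λ, g) = (Λ', g) := by
  have h' : Relation.ReflTransGen (StepOn r fun _ => True) Λ Λ' := h
  clear h
  induction h' with
  | refl => exact ⟨[], rfl⟩
  | tail _ hstep ih =>
    obtain ⟨i, -, rfl⟩ := hstep
    obtain ⟨w, hw⟩ := ih
    exact ⟨i.castSucc :: w, by rw [listAct_cons, hw, dm_castSucc]⟩

theorem reach_gen {r : Fin n → K → K} {rn : K → K} (hpre : IsPreExtender r rn)
    (x Λ Λ' : K) (γ : PresentedGroup (UnivRels r rn)) :
    ∃ w, listAct r rn (univVoltage r rn) w (Λ, γ) = (Λ', univVoltage r rn x * γ) := by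
  obtain ⟨w₁, hw₁⟩ := reach_base hpre (hpre.maniplex.conn Λ x) γ
  obtain ⟨w₂, hw₂⟩ := reach_base hpre (hpre.maniplex.conn (rn x) Λ')
    (univVoltage r rn x * γ)
  refine ⟨w₂ ++ [Fin.last n] ++ w₁, ?_⟩
  rw [listAct_append, listAct_append, hw₁]
  have h1 : listAct r rn (univVoltage r rn) [Fin.last n] (x, γ) =
      (rn x, univVoltage r rn x * γ) := dm_last r rn _ _
  rw [h1, hw₂]

theorem reach_all {r : Fin n → K → K} {rn : K → K} (hpre : IsPreExtender r rn)
    (g : PresentedGroup (UnivRels r rn)) (Λ Λ' : K) (γ : PresentedGroup (UnivRels r rn)) :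
    ∃ w, listAct r rn (univVoltage r rn) w (Λ, γ) = (Λ', g * γ) := by
  induction g using PresentedGroup.induction_on with
  | H z =>
  induction z using FreeGroup.induction_on generalizing Λ Λ' γ with
  | C1 =>
    rw [map_one, one_mul]
    exact reach_base hpre (hpre.maniplex.conn Λ Λ') γ
  | of x =>
    exact reach_gen hpre x Λ Λ' γ
  | inv_of x _ =>
    have he : ((PresentedGroup.mk (UnivRels r rn)) (FreeGroup.of x : FreeGroup K))⁻¹ =
        univVoltage r rn (rn x) := vv_inv r hpre.rn_invol x
    rw [map_inv, he]
    exact reach_gen hpre (rn x) Λ Λ' γ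
  | mul a b iha ihb =>
    rw [map_mul, mul_assoc]
    obtain ⟨w₁, hw₁⟩ := ihb Λ Λ γ
    obtain ⟨w₂, hw₂⟩ := iha Λ Λ' (PresentedGroup.mk (UnivRels r rn) b * γ)
    exact ⟨w₂ ++ w₁, by rw [listAct_append, hw₁, hw₂]⟩

theorem conn_derived {r : Fin n → K → K} {rn : K → K} (hpre : IsPreExtender r rn)
    (p q : K × PresentedGroup (UnivRels r rn)) :
    ∃ w, listAct r rn (univVoltage r rn) w p = q := by
  obtain ⟨w, hw⟩ := reach_all hpre (q.2 * p.2⁻¹) p.1 q.1 p.2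
  rw [inv_mul_cancel_right] at hw
  exact ⟨w, hw⟩

end Statement17Aux

namespace Statement17Aux

variable {K : Type*} {n : ℕ}

/-! ### Stabilizer transfer -/

theorem stab_trans {r : Fin n → K → K} {rn : K → K} (hpre : IsPreExtender r rn)
    {Φ Ψ : K} {σ : Equiv.Perm K} (hσ : σ ∈ heartSet r rn) (hΦΨ : σ Φ = Ψ)
    (w : List (Fin (n + 1))) (γ δ : PresentedGroup (UnivRels r rn))
    (h : listAct r rn (univVoltage r rn) w (Φ, γ) = (Φ, γ)) :
    listAct r rn (univVoltage r rn) w (Ψ, δ) = (Ψ, δ) := by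
  rw [listAct_eq] at h
  have h1 : actK r rn w Φ = Φ := congrArg Prod.fst h
  have h2 : volt r rn (univVoltage r rn) w Φ = 1 := by
    have := congrArg Prod.snd h
    simp only at this
    exact mul_eq_right.1 this
  obtain ⟨h3, h4⟩ := main_transfer hpre hσ w h1 h2
  rw [listAct_eq, ← hΦΨ, h3, h4, one_mul]

theorem wd {r : Fin n → K → K} {rn : K → K} (hpre : IsPreExtender r rn)
    {A B : K × PresentedGroup (UnivRels r rn)}
    (hstab : ∀ u, listAct r rn (univVoltage r rn) u A = A →
      listAct r rn (univVoltage r rn) u B = B)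
    {w w' : List (Fin (n + 1))}
    (h : listAct r rn (univVoltage r rn) w A = listAct r rn (univVoltage r rn) w' A) :
    listAct r rn (univVoltage r rn) w B = listAct r rn (univVoltage r rn) w' B := by
  have hA : listAct r rn (univVoltage r rn) (w'.reverse ++ w) A = A := by
    rw [listAct_append, h, listAct_reverse hpre]
  have hB := hstab _ hA
  rw [listAct_append] at hB
  calc listAct r rn (univVoltage r rn) w B
      = listAct r rn (univVoltage r rn) w'
          (listAct r rn (univVoltage r rn) w'.reverse
            (listAct r rn (univVoltage r rn) w B)) :=
        (listAct_reverse' hpre w' _).symm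
    _ = listAct r rn (univVoltage r rn) w' B := by rw [hB]

/-! ### From automorphisms of the extension to heart elements -/

theorem snd_const {r : Fin n → K → K} {rn : K → K} (hpre : IsPreExtender r rn)
    {τ : Equiv.Perm (K × PresentedGroup (UnivRels r rn))}
    (hτ : τ ∈ autGroup (derivedMono r rn (univVoltage r rn)))
    (g : PresentedGroup (UnivRels r rn)) (Λ Λ' : K) :
    (τ (Λ, g)).2 = (τ (Λ', g)).2 := by
  have h' : Relation.ReflTransGen (StepOn r fun _ => True) Λ Λ' := hpre.maniplex.conn Λ Λ'
  induction h' with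
  | refl => rfl
  | tail _ hstep ih =>
    obtain ⟨i, -, rfl⟩ := hstep
    rename_i b _
    have e1 : τ (r i b, g) = derivedMono r rn (univVoltage r rn) i.castSucc (τ (b, g)) := by
      rw [← dm_castSucc r rn (univVoltage r rn) i (b, g)]
      exact hτ i.castSucc (b, g)
    rw [ih, e1, dm_castSucc]

/-- The heart automorphism induced by an automorphism of the extension at level `g`. -/
noncomputable def tPerm {r : Fin n → K → K} {rn : K → K} (hpre : IsPreExtender r rn)
    {τ : Equiv.Perm (K × PresentedGroup (UnivRels r rn))}
    (hτ : τ ∈ autGroup (derivedMono r rn (univVoltage r rn)))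
    (Λ₀ : K) (g : PresentedGroup (UnivRels r rn)) : Equiv.Perm K where
  toFun Λ := (τ (Λ, g)).1
  invFun Λ := (τ⁻¹ (Λ, (τ (Λ₀, g)).2)).1
  left_inv Λ := by
    have h1 : (τ (Λ₀, g)).2 = (τ (Λ, g)).2 := snd_const hpre hτ g Λ₀ Λ
    show (τ⁻¹ ((τ (Λ, g)).1, (τ (Λ₀, g)).2)).1 = Λ
    rw [h1]
    have e : ((τ (Λ, g)).1, (τ (Λ, g)).2) = τ (Λ, g) := rfl
    rw [e, show ∀ y, τ⁻¹ (τ y) = y from fun y => Equiv.Perm.inv_eq_iff_eq.mpr rfl]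
  right_inv Λ := by
    set c := (τ (Λ₀, g)).2 with hc
    have h2 : (τ⁻¹ (Λ, c)).2 = g := by
      have h3 := snd_const hpre ((autGroup (derivedMono r rn (univVoltage r rn))).inv_mem hτ)
        c Λ ((τ (Λ₀, g)).1)
      rw [h3]
      have e : ((τ (Λ₀, g)).1, c) = τ (Λ₀, g) := rfl
      rw [e, show ∀ y, τ⁻¹ (τ y) = y from fun y => Equiv.Perm.inv_eq_iff_eq.mpr rfl]
    show (τ ((τ⁻¹ (Λ, c)).1, g)).1 = Λ
    rw [← h2]
    have e : ((τ⁻¹ (Λ, c)).1, (τ⁻¹ (Λ, c)).2) = τ⁻¹ (Λ, c) := rfl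
    rw [e, show ∀ y, τ (τ⁻¹ y) = y from fun y => Equiv.Perm.eq_inv_iff_eq.mp rfl]

theorem tPerm_apply {r : Fin n → K → K} {rn : K → K} (hpre : IsPreExtender r rn)
    {τ : Equiv.Perm (K × PresentedGroup (UnivRels r rn))}
    (hτ : τ ∈ autGroup (derivedMono r rn (univVoltage r rn)))
    (Λ₀ : K) (g : PresentedGroup (UnivRels r rn)) (Λ : K) :
    tPerm hpre hτ Λ₀ g Λ = (τ (Λ, g)).1 := rfl

theorem tPerm_mem_aut {r : Fin n → K → K} {rn : K → K} (hpre : IsPreExtender r rn)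
    {τ : Equiv.Perm (K × PresentedGroup (UnivRels r rn))}
    (hτ : τ ∈ autGroup (derivedMono r rn (univVoltage r rn)))
    (Λ₀ : K) (g : PresentedGroup (UnivRels r rn)) :
    tPerm hpre hτ Λ₀ g ∈ autGroup r := by
  intro i x
  show (τ (r i x, g)).1 = r i ((τ (x, g)).1)
  have e1 : τ (r i x, g) = derivedMono r rn (univVoltage r rn) i.castSucc (τ (x, g)) := by
    rw [← dm_castSucc r rn (univVoltage r rn) i (x, g)]
    exact hτ i.castSucc (x, g)
  rw [e1, dm_castSucc]

theorem tPerm_step {r : Fin n → K → K} {rn : K → K} (hpre : IsPreExtender r rn)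
    {τ : Equiv.Perm (K × PresentedGroup (UnivRels r rn))}
    (hτ : τ ∈ autGroup (derivedMono r rn (univVoltage r rn)))
    (Λ₀ : K) (g : PresentedGroup (UnivRels r rn)) (Λ : K) :
    rn (tPerm hpre hτ Λ₀ g Λ) =
      tPerm hpre hτ Λ₀ (univVoltage r rn Λ * g) (rn Λ) := by
  show rn ((τ (Λ, g)).1) = (τ (rn Λ, univVoltage r rn Λ * g)).1
  have e1 : τ (rn Λ, univVoltage r rn Λ * g) =
      derivedMono r rn (univVoltage r rn) (Fin.last n) (τ (Λ, g)) := by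
    rw [← dm_last r rn (univVoltage r rn) (Λ, g)]
    exact hτ (Fin.last n) (Λ, g)
  rw [e1, dm_last]

theorem tPerm_heart {r : Fin n → K → K} {rn : K → K} (hpre : IsPreExtender r rn)
    {τ : Equiv.Perm (K × PresentedGroup (UnivRels r rn))}
    (hτ : τ ∈ autGroup (derivedMono r rn (univVoltage r rn)))
    (Λ₀ : K) (g : PresentedGroup (UnivRels r rn)) :
    tPerm hpre hτ Λ₀ g ∈ heartSet r rn := by
  refine ⟨Set.range (tPerm hpre hτ Λ₀), ⟨?_, ?_⟩, ⟨g, rfl⟩⟩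
  · rintro π ⟨g', rfl⟩
    exact tPerm_mem_aut hpre hτ Λ₀ g'
  · rintro Λ π ⟨g', rfl⟩
    exact ⟨tPerm hpre hτ Λ₀ (univVoltage r rn Λ * g'), ⟨_, rfl⟩,
      tPerm_step hpre hτ Λ₀ g' Λ⟩

end Statement17Aux

/-- Two flags `(Φ, γ)` and `(Ψ, δ)` of the universal Cayley extension
`U(K, r_n)` lie in the same `Aut(U(K, r_n))`-orbit iff `Φ` and `Ψ` lie in the same
`♥(K, r_n)`-orbit; i.e. the symmetry type graph of `U(K, r_n)` is `K_{r_n}/♥(K, r_n)`. -/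
theorem statement17 {K : Type*} {n : ℕ} (r : Fin n → K → K) (rn : K → K)
    (hpre : IsPreExtender r rn) :
    ∀ (Φ Ψ : K) (γ δ : PresentedGroup (UnivRels r rn)),
      (∃ τ ∈ autGroup (derivedMono r rn (univVoltage r rn)), τ (Φ, γ) = (Ψ, δ)) ↔
        ∃ σ ∈ heartSet r rn, σ Φ = Ψ := by
  open Statement17Aux in
  intro Φ Ψ γ δ
  constructor
  · rintro ⟨τ, hτ, hτΦ⟩
    refine ⟨tPerm hpre hτ Φ γ, tPerm_heart hpre hτ Φ γ, ?_⟩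
    rw [tPerm_apply hpre hτ Φ γ Φ, hτΦ]
  · rintro ⟨σ, hσ, hσΦ⟩
    classical
    have hσ' : σ⁻¹ ∈ heartSet r rn := heart_inv hσ
    have hσΦ' : σ⁻¹ Ψ = Φ := by rw [← hσΦ]; exact Equiv.Perm.inv_eq_iff_eq.mpr rfl
    have hstabF : ∀ u, listAct r rn (univVoltage r rn) u (Φ, γ) = (Φ, γ) →
        listAct r rn (univVoltage r rn) u (Ψ, δ) = (Ψ, δ) :=
      fun u h => stab_trans hpre hσ hσΦ u γ δ h
    have hstabB : ∀ u, listAct r rn (univVoltage r rn) u (Ψ, δ) = (Ψ, δ) →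
        listAct r rn (univVoltage r rn) u (Φ, γ) = (Φ, γ) :=
      fun u h => stab_trans hpre hσ' hσΦ' u δ γ h
    have cf : ∀ p, ∃ w, listAct r rn (univVoltage r rn) w (Φ, γ) = p :=
      conn_derived hpre (Φ, γ)
    have cb : ∀ p, ∃ w, listAct r rn (univVoltage r rn) w (Ψ, δ) = p :=
      conn_derived hpre (Ψ, δ)
    have hTspec : ∀ p w, listAct r rn (univVoltage r rn) w (Φ, γ) = p →
        listAct r rn (univVoltage r rn) (cf p).choose (Ψ, δ) =
          listAct r rn (univVoltage r rn) w (Ψ, δ) :=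
      fun p w hw => wd hpre hstabF ((cf p).choose_spec.trans hw.symm)
    have hT'spec : ∀ p w, listAct r rn (univVoltage r rn) w (Ψ, δ) = p →
        listAct r rn (univVoltage r rn) (cb p).choose (Φ, γ) =
          listAct r rn (univVoltage r rn) w (Φ, γ) :=
      fun p w hw => wd hpre hstabB ((cb p).choose_spec.trans hw.symm)
    have hleft : ∀ p, listAct r rn (univVoltage r rn)
        (cb (listAct r rn (univVoltage r rn) (cf p).choose (Ψ, δ))).choose (Φ, γ) = p := by
      intro p
      rw [hT'spec _ (cf p).choose rfl, (cf p).choose_spec]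
    have hright : ∀ p, listAct r rn (univVoltage r rn)
        (cf (listAct r rn (univVoltage r rn) (cb p).choose (Φ, γ))).choose (Ψ, δ) = p := by
      intro p
      rw [hTspec _ (cb p).choose rfl, (cb p).choose_spec]
    refine ⟨⟨fun p => listAct r rn (univVoltage r rn) (cf p).choose (Ψ, δ),
        fun p => listAct r rn (univVoltage r rn) (cb p).choose (Φ, γ),
        fun p => hleft p, fun p => hright p⟩, ?_, ?_⟩
    · intro i p
      show listAct r rn (univVoltage r rn)
          (cf (derivedMono r rn (univVoltage r rn) i p)).choose (Ψ, δ) =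
        derivedMono r rn (univVoltage r rn) i
          (listAct r rn (univVoltage r rn) (cf p).choose (Ψ, δ))
      have h1 : listAct r rn (univVoltage r rn) (i :: (cf p).choose) (Φ, γ) =
          derivedMono r rn (univVoltage r rn) i p := by
        rw [listAct_cons, (cf p).choose_spec]
      rw [hTspec _ _ h1, listAct_cons]
    · show listAct r rn (univVoltage r rn) (cf (Φ, γ)).choose (Ψ, δ) = (Ψ, δ)
      exact hTspec (Φ, γ) [] rfl
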